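/- arXiv:1807.04831 — 5 statements merged into one kernel-verified Lean document; each statement's English description precedes it below -/
import Mathlib

section
/- For every i ≥ 2, all six bottleneck points of stage i of the H fractal belong to the stage h_i; that is, B_i^H ⊆ h_i. -/
/-- A point of the integer lattice `ℤ²`. -/
abbrev Pt := ℤ × ℤ

/-- The generator of the H fractal. -/
def GH : Set Pt := {(0,0),(0,1),(0,2),(1,1),(2,0),(2,1),(2,2)}

/-- `scaleAdd k A B = A + k·B` (componentwise). -/
def scaleAdd (k : ℤ) (A B : Set Pt) : Set Pt :=
  {q | ∃ p ∈ A, ∃ g ∈ B, q = (p.1 + k * g.1, p.2 + k * g.2)}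

/-- The stages of the H fractal: `hstage 1 = GH` and
`hstage (i+1) = hstage i + 3^i · GH` for `i ≥ 1`. -/
def hstage : ℕ → Set Pt
  | 0 => ∅
  | 1 => GH
  | n + 2 => scaleAdd (3 ^ (n + 1)) (hstage (n + 1)) GH

/-- The H fractal `𝐇 = ⋃_{i ≥ 1} h_i`. -/
def HFractal : Set Pt := {p | ∃ i : ℕ, 1 ≤ i ∧ p ∈ hstage i}

/-- The base bottleneck offsets. -/
def B0 : Set Pt := {(0,0),(0,1),(0,2),(2,0),(2,1),(2,2)}

/-- The six bottleneck points of stage `h_i` of the H fractal (for `i ≥ 2`). -/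
def BH (i : ℕ) : Set Pt :=
  {q | ∃ b ∈ B0,
    q = (3 ^ (i - 1) + ((3 : ℤ) ^ (i - 2) - 1) / 2 + 3 ^ (i - 2) * b.1,
         3 ^ (i - 1) + ((3 : ℤ) ^ (i - 2) - 1) / 2 + 3 ^ (i - 2) * b.2)}

lemma half_pow_succ (n : ℕ) : ((3 : ℤ) ^ (n + 1) - 1) / 2 = ((3 : ℤ) ^ n - 1) / 2 + 3 ^ n := by
  have h2 : ((3 : ℤ) ^ (n + 1) - 1) = ((3 : ℤ) ^ n - 1) + 3 ^ n * 2 := by ring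
  rw [h2, Int.add_mul_ediv_right _ _ two_ne_zero]

lemma center_mem : ∀ n : ℕ, ∀ g ∈ GH,
    ((((3 : ℤ) ^ n - 1) / 2 + 3 ^ n * g.1), (((3 : ℤ) ^ n - 1) / 2 + 3 ^ n * g.2))
      ∈ hstage (n + 1) := by
  intro n
  induction n with
  | zero =>
    intro g hg
    simpa [hstage] using hg
  | succ n ih =>
    intro g hg
    have h11 : ((1 : ℤ), (1 : ℤ)) ∈ GH := by simp [GH]
    have hp := ih ((1 : ℤ), (1 : ℤ)) h11
    refine ⟨_, hp, g, hg, ?_⟩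
    simp only [half_pow_succ, Prod.mk.injEq]
    exact ⟨by ring, by ring⟩

/-- For every `i ≥ 2`, all six bottleneck points of stage `i`
of the H fractal belong to `h_i`. -/
theorem bottlenecks_mem_hstage : ∀ i : ℕ, 2 ≤ i → BH i ⊆ hstage i := by
  intro i hi q hq
  obtain ⟨n, rfl⟩ : ∃ n, i = n + 2 := ⟨i - 2, by omega⟩
  obtain ⟨b, hb, rfl⟩ := hq
  have hbG : b ∈ GH := by
    simp only [B0, Set.mem_insert_iff, Set.mem_singleton_iff] at hb
    simp only [GH, Set.mem_insert_iff, Set.mem_singleton_iff]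
    tauto
  have hp := center_mem n b hbG
  have h11 : ((1 : ℤ), (1 : ℤ)) ∈ GH := by simp [GH]
  refine ⟨_, hp, ((1 : ℤ), (1 : ℤ)), h11, ?_⟩
  have he : n + 2 - 1 = n + 1 := by omega
  have he2 : n + 2 - 2 = n := by omega
  simp only [he, he2, Prod.mk.injEq, pow_succ]
  exact ⟨by ring, by ring⟩
end

section
/- For every i ≥ 1, writing c = (3^i − 1)/2, the center point (c, c) of stage h_i belongs to h_i, and the only points of the whole H fractal 𝐇 that are grid-adjacent to (c, c) are (c−1, c) and (c+1, c); in particular (c, c−1) ∉ 𝐇 and (c, c+1) ∉ 𝐇. -/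
/-- Two points are grid-adjacent when their `ℓ¹` distance is `1`. -/
def adjPt (p q : Pt) : Prop := |p.1 - q.1| + |p.2 - q.2| = 1

lemma mem_GH_iff (g : Pt) : g ∈ GH ↔
    g = (0,0) ∨ g = (0,1) ∨ g = (0,2) ∨ g = (1,1) ∨ g = (2,0) ∨ g = (2,1) ∨ g = (2,2) := by
  simp [GH]

lemma hstage_bounds : ∀ i, ∀ p ∈ hstage i,
    0 ≤ p.1 ∧ p.1 < 3 ^ i ∧ 0 ≤ p.2 ∧ p.2 < 3 ^ i := by
  intro i
  induction i using hstage.induct with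
  | case1 => intro p hp; exact absurd hp (by simp [hstage])
  | case2 =>
    intro p hp
    rcases (mem_GH_iff p).1 hp with h|h|h|h|h|h|h <;> subst h <;> norm_num
  | case3 n ih =>
    intro p hp
    obtain ⟨q, hq, g, hg, rfl⟩ := hp
    obtain ⟨h1, h2, h3, h4⟩ := ih q hq
    have hpow : (3:ℤ) ^ (n+2) = 3 * 3 ^ (n+1) := by ring
    rcases (mem_GH_iff g).1 hg with h|h|h|h|h|h|h <;> subst h <;> simp [hpow] <;> omega

lemma hstage_mono : ∀ j k, 1 ≤ j → j ≤ k → hstage j ⊆ hstage k := by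
  intro j k hj hjk
  induction k with
  | zero => omega
  | succ n ih =>
    rcases Nat.lt_or_ge j (n+1) with h | h
    · have hn : 1 ≤ n := by omega
      have step : hstage n ⊆ hstage (n+1) := by
        obtain ⟨m, rfl⟩ : ∃ m, n = m + 1 := ⟨n - 1, by omega⟩
        intro p hp
        exact ⟨p, hp, (0,0), by simp [GH], by simp⟩
      exact fun p hp => step (ih (by omega) hp)
    · have : j = n + 1 := by omega
      subst this; exact fun p hp => hp

lemma hstage_stable : ∀ i, 1 ≤ i → ∀ j, i ≤ j → ∀ p : Pt,
    0 ≤ p.1 → p.1 < 3 ^ i → 0 ≤ p.2 → p.2 < 3 ^ i → p ∈ hstage j → p ∈ hstage i := by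
  intro i hi j
  induction j with
  | zero => intro h; omega
  | succ n ih =>
    intro hij p h1 h2 h3 h4 hp
    rcases Nat.lt_or_ge i (n+1) with h | h
    · have hn1 : 1 ≤ n := by omega
      obtain ⟨m, rfl⟩ : ∃ m, n = m + 1 := ⟨n - 1, by omega⟩
      obtain ⟨q, hq, g, hg, heq⟩ := hp
      have hq1 : (0:ℤ) ≤ q.1 := (hstage_bounds _ q hq).1
      have hq2 : q.1 < 3 ^ (m+1) := (hstage_bounds _ q hq).2.1
      have hq3 : (0:ℤ) ≤ q.2 := (hstage_bounds _ q hq).2.2.1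
      have hq4 : q.2 < 3 ^ (m+1) := (hstage_bounds _ q hq).2.2.2
      have hpow : (3:ℤ) ^ i ≤ 3 ^ (m+1) := by
        apply pow_le_pow_right₀ (by norm_num); omega
      have hpoweq : (3:ℤ)^(m+1) = 3 * 3^m := by ring
      have hx : p.1 = q.1 + 3^(m+1) * g.1 := congrArg Prod.fst heq
      have hy : p.2 = q.2 + 3^(m+1) * g.2 := congrArg Prod.snd heq
      have hg0 : g = (0, 0) := by
        rcases (mem_GH_iff g).1 hg with hG|hG|hG|hG|hG|hG|hG <;> subst hG <;>
          first | rfl | (exfalso; norm_num at hx hy; omega)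
      subst hg0
      norm_num at hx hy
      have hpq : p = q := Prod.ext hx hy
      rw [hpq]
      exact ih (by omega) q hq1 (by omega) hq3 (by omega) hq
    · have : i = n + 1 := by omega
      subst this; exact hp

lemma key_center : ∀ i, 1 ≤ i → ∀ c : ℤ, 2 * c + 1 = 3 ^ i →
    ((c, c) : Pt) ∈ hstage i ∧ ((c - 1, c) : Pt) ∈ hstage i ∧
    ((c + 1, c) : Pt) ∈ hstage i ∧
    ((c, c - 1) : Pt) ∉ hstage i ∧ ((c, c + 1) : Pt) ∉ hstage i := by
  intro i
  induction i with
  | zero => intro h; omega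
  | succ n ih =>
    intro _ c hc
    rcases Nat.eq_zero_or_pos n with rfl | hn
    · have : c = 1 := by norm_num at hc; omega
      subst this
      refine ⟨?_, ?_, ?_, ?_, ?_⟩ <;>
        simp [hstage, mem_GH_iff, Prod.ext_iff] <;> omega
    · obtain ⟨m, rfl⟩ : ∃ m, n = m + 1 := ⟨n - 1, by omega⟩
      have hpow : (3:ℤ)^(m+2) = 3 * 3^(m+1) := by ring
      have hpoweq : (3:ℤ)^(m+1) = 3 * 3^m := by ring
      have hMpos : (3:ℤ)^(m+1) ≥ 3 := by
        have : (3:ℤ)^1 ≤ 3^(m+1) := pow_le_pow_right₀ (by norm_num) (by omega)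
        simpa using this
      set d : ℤ := c - 3 ^ (m+1) with hd
      have hd2 : 2 * d + 1 = 3 ^ (m+1) := by simp only [hd]; rw [hpow] at hc; omega
      obtain ⟨k1, k2, k3, k4, k5⟩ := ih (by omega) d hd2
      have hcd : c = d + 3^(m+1) := by omega
      have hd1 : 1 ≤ d := by omega
      have hmemG : ((1:ℤ), (1:ℤ)) ∈ GH := by simp [GH]
      refine ⟨?_, ?_, ?_, ?_, ?_⟩
      · exact ⟨(d, d), k1, (1,1), hmemG, by simp [Prod.ext_iff]; omega⟩
      · exact ⟨(d - 1, d), k2, (1,1), hmemG, by simp [Prod.ext_iff]; omega⟩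
      · exact ⟨(d + 1, d), k3, (1,1), hmemG, by simp [Prod.ext_iff]; omega⟩
      · rintro ⟨⟨x, y⟩, hq, g, hg, heq⟩
        have hq1 : (0:ℤ) ≤ x := (hstage_bounds _ _ hq).1
        have hq2 : x < 3 ^ (m+1) := (hstage_bounds _ _ hq).2.1
        have hq3 : (0:ℤ) ≤ y := (hstage_bounds _ _ hq).2.2.1
        have hq4 : y < 3 ^ (m+1) := (hstage_bounds _ _ hq).2.2.2
        have hx : c = x + 3^(m+1) * g.1 := congrArg Prod.fst heq
        have hy : c - 1 = y + 3^(m+1) * g.2 := congrArg Prod.snd heq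
        rcases (mem_GH_iff g).1 hg with hG|hG|hG|hG|hG|hG|hG <;> subst hG <;>
          norm_num at hx hy <;> try omega
        exact k4 (by rw [show ((x:ℤ), y) = ((d:ℤ), d - 1) by
          simp only [Prod.mk.injEq]; omega] at hq; exact hq)
      · rintro ⟨⟨x, y⟩, hq, g, hg, heq⟩
        have hq1 : (0:ℤ) ≤ x := (hstage_bounds _ _ hq).1
        have hq2 : x < 3 ^ (m+1) := (hstage_bounds _ _ hq).2.1
        have hq3 : (0:ℤ) ≤ y := (hstage_bounds _ _ hq).2.2.1
        have hq4 : y < 3 ^ (m+1) := (hstage_bounds _ _ hq).2.2.2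
        have hx : c = x + 3^(m+1) * g.1 := congrArg Prod.fst heq
        have hy : c + 1 = y + 3^(m+1) * g.2 := congrArg Prod.snd heq
        rcases (mem_GH_iff g).1 hg with hG|hG|hG|hG|hG|hG|hG <;> subst hG <;>
          norm_num at hx hy <;> try omega
        exact k5 (by rw [show ((x:ℤ), y) = ((d:ℤ), d + 1) by
          simp only [Prod.mk.injEq]; omega] at hq; exact hq)

/-- For `i ≥ 1` and `c = (3^i − 1)/2`, the center point `(c, c)`
belongs to `h_i`, the set of points of `𝐇` grid-adjacent to `(c, c)` is exactly
`{(c − 1, c), (c + 1, c)}`; in particular `(c, c − 1) ∉ 𝐇` and `(c, c + 1) ∉ 𝐇`. -/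
theorem hFractal_center_neighbors :
    ∀ i : ℕ, 1 ≤ i →
      (((((3 : ℤ) ^ i - 1) / 2, ((3 : ℤ) ^ i - 1) / 2) : Pt) ∈ hstage i) ∧
      {q ∈ HFractal |
          adjPt ((((3 : ℤ) ^ i - 1) / 2, ((3 : ℤ) ^ i - 1) / 2) : Pt) q} =
        ({(((3 : ℤ) ^ i - 1) / 2 - 1, ((3 : ℤ) ^ i - 1) / 2),
          (((3 : ℤ) ^ i - 1) / 2 + 1, ((3 : ℤ) ^ i - 1) / 2)} : Set Pt) ∧
      ((((3 : ℤ) ^ i - 1) / 2, ((3 : ℤ) ^ i - 1) / 2 - 1) : Pt) ∉ HFractal ∧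
      ((((3 : ℤ) ^ i - 1) / 2, ((3 : ℤ) ^ i - 1) / 2 + 1) : Pt) ∉ HFractal := by
  intro i hi
  set c : ℤ := ((3:ℤ) ^ i - 1) / 2 with hcdef
  have hodd : (2:ℤ) ∣ (3 ^ i - 1) := by
    have h : Odd ((3:ℤ) ^ i) := Odd.pow ⟨1, by ring⟩
    obtain ⟨k, hk⟩ := h
    exact ⟨k, by omega⟩
  have hc : 2 * c + 1 = 3 ^ i := by omega
  have h3i : (3:ℤ) ^ i ≥ 3 := by
    have : (3:ℤ) ^ 1 ≤ 3 ^ i := pow_le_pow_right₀ (by norm_num) hi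
    simpa using this
  obtain ⟨k1, k2, k3, k4, k5⟩ := key_center i hi c hc
  have hbox : ∀ x y : ℤ, 0 ≤ x → x < 3 ^ i → 0 ≤ y → y < 3 ^ i →
      ((x, y) : Pt) ∈ HFractal → ((x, y) : Pt) ∈ hstage i := by
    rintro x y b1 b2 b3 b4 ⟨j, hj, hpj⟩
    rcases le_total j i with h | h
    · exact hstage_mono j i hj h hpj
    · exact hstage_stable i hi j h (x, y) b1 b2 b3 b4 hpj
  refine ⟨k1, ?_, ?_, ?_⟩
  · ext q
    obtain ⟨x, y⟩ := q
    simp only [Set.mem_sep_iff, Set.mem_insert_iff, Set.mem_singleton_iff, Prod.mk.injEq]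
    constructor
    · rintro ⟨hH, hadj⟩
      have hadj' : |c - x| + |c - y| = 1 := hadj
      have hcases : (x = c - 1 ∧ y = c) ∨ (x = c + 1 ∧ y = c) ∨
          (x = c ∧ y = c - 1) ∨ (x = c ∧ y = c + 1) := by
        rcases abs_cases (c - x) with ⟨e1, _⟩ | ⟨e1, _⟩ <;>
          rcases abs_cases (c - y) with ⟨e2, _⟩ | ⟨e2, _⟩ <;> omega
      rcases hcases with ⟨rfl, rfl⟩ | ⟨rfl, rfl⟩ | ⟨rfl, rfl⟩ | ⟨rfl, rfl⟩
      · left; exact ⟨rfl, rfl⟩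
      · right; exact ⟨rfl, rfl⟩
      · exact absurd (hbox c (c - 1) (by omega) (by omega) (by omega) (by omega) hH) k4
      · exact absurd (hbox c (c + 1) (by omega) (by omega) (by omega) (by omega) hH) k5
    · rintro (⟨rfl, rfl⟩ | ⟨rfl, rfl⟩)
      · exact ⟨⟨i, hi, k2⟩, show |c - (c - 1)| + |c - c| = 1 by norm_num⟩
      · exact ⟨⟨i, hi, k3⟩, show |c - (c + 1)| + |c - c| = 1 by norm_num⟩
  · intro hH
    exact k4 (hbox c (c - 1) (by omega) (by omega) (by omega) (by omega) hH)
  · intro hH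
    exact k5 (hbox c (c + 1) (by omega) (by omega) (by omega) (by omega) hH)
end

section
/- For every i ≥ 2, the left-center of stage h_i of the H fractal is separated from the rest of the fractal by the three left bottleneck points and the center point: if p is in the left-center of h_i, q ∈ 𝐇, q is not in the left-center of h_i, and p and q are grid-adjacent, then q is one of the three left bottleneck points of h_i or the center point of h_i. -/
/-- The three left bottleneck points of stage `h_i` of the H fractal (for `i ≥ 2`). -/
def leftBotH (i : ℕ) : Set Pt :=
  {q | ∃ b ∈ ({(0,0),(0,1),(0,2)} : Set Pt),
    q = (3 ^ (i - 1) + ((3 : ℤ) ^ (i - 2) - 1) / 2 + 3 ^ (i - 2) * b.1,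
         3 ^ (i - 1) + ((3 : ℤ) ^ (i - 2) - 1) / 2 + 3 ^ (i - 2) * b.2)}

/-- The center point of stage `h_i`. -/
def centerH (i : ℕ) : Pt := (((3 : ℤ) ^ i - 1) / 2, ((3 : ℤ) ^ i - 1) / 2)

/-- The left-center of stage `h_i`: the points of `h_i` strictly between the left
bottleneck column and the center column. -/
def leftCenterH (i : ℕ) : Set Pt :=
  {p ∈ hstage i |
    3 ^ (i - 1) + ((3 : ℤ) ^ (i - 2) - 1) / 2 < p.1 ∧ p.1 < ((3 : ℤ) ^ i - 1) / 2}

/-!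
`h_{n+1}` is the union of the seven translates `h_n + 3^n g` (`g ∈ G_H`) of side `3^n`, and `𝐇`
meets the box `[0, 3^n)²` exactly in `h_n`. So a point of `h_{n+2}` in the middle third of the
columns lies in the central block, and one in the left third lies in one of the three left blocks.
Recursing on this, the center is the only point of `h_i` in its column, and the three left
bottleneck points are the only points of `h_{n+2}` in theirs. A neighbour of a left-center point
stays in the central block, hence in `h_i`; so if it leaves the left-center, it has stepped into
one of these two columns.
-/

lemma three_pow_mod_two (k : ℕ) : (3 : ℤ) ^ k % 2 = 1 :=
  Int.odd_iff.mp (Odd.pow ⟨1, rfl⟩)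

lemma mem_GH {g : Pt} (hg : g ∈ GH) :
    g = (0,0) ∨ g = (0,1) ∨ g = (0,2) ∨ g = (1,1) ∨ g = (2,0) ∨ g = (2,1) ∨ g = (2,2) := by
  simpa [GH] using hg

lemma adjPt.abs_sub_le {p q : Pt} (h : adjPt p q) : |p.1 - q.1| ≤ 1 ∧ |p.2 - q.2| ≤ 1 := by
  have := abs_nonneg (p.1 - q.1)
  have := abs_nonneg (p.2 - q.2)
  unfold adjPt at h
  constructor <;> linarith

lemma mem_box_of_mem_hstage : ∀ {i : ℕ} {q : Pt}, q ∈ hstage i →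
    0 ≤ q.1 ∧ q.1 < 3 ^ i ∧ 0 ≤ q.2 ∧ q.2 < 3 ^ i
  | 0, _, hq => hq.elim
  | 1, _, hq => by rcases mem_GH hq with rfl | rfl | rfl | rfl | rfl | rfl | rfl <;> norm_num
  | n + 2, _, hq => by
    obtain ⟨r, hr, g, hg, rfl⟩ := hq
    have := mem_box_of_mem_hstage hr
    have : (3 : ℤ) ^ (n + 2) = 3 * 3 ^ (n + 1) := pow_succ' 3 (n + 1)
    rcases mem_GH hg with rfl | rfl | rfl | rfl | rfl | rfl | rfl <;> dsimp only <;> omega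

lemma hstage_monotone : Monotone hstage := by
  refine monotone_nat_of_le_succ fun n q hq => ?_
  cases n with
  | zero => exact hq.elim
  | succ n => exact ⟨q, hq, (0,0), by simp [GH], by simp⟩

lemma exists_of_mem_hstage_middle_column {n : ℕ} {q : Pt} (hq : q ∈ hstage (n + 2))
    (h₁ : 3 ^ (n + 1) ≤ q.1) (h₂ : q.1 < 2 * 3 ^ (n + 1)) :
    ∃ r ∈ hstage (n + 1), q = (r.1 + 3 ^ (n + 1), r.2 + 3 ^ (n + 1)) := by
  obtain ⟨r, hr, g, hg, rfl⟩ := hq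
  have := mem_box_of_mem_hstage hr
  refine ⟨r, hr, ?_⟩
  rcases mem_GH hg with rfl | rfl | rfl | rfl | rfl | rfl | rfl <;> dsimp only at h₁ h₂ ⊢ <;>
    first | omega | simp

lemma exists_of_mem_hstage_left_column {n : ℕ} {q : Pt} (hq : q ∈ hstage (n + 2))
    (h : q.1 < 3 ^ (n + 1)) :
    ∃ r ∈ hstage (n + 1), ∃ k : ℤ, 0 ≤ k ∧ k ≤ 2 ∧ q = (r.1, r.2 + 3 ^ (n + 1) * k) := by
  obtain ⟨r, hr, g, hg, rfl⟩ := hq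
  have := mem_box_of_mem_hstage hr
  refine ⟨r, hr, g.2, ?_⟩
  rcases mem_GH hg with rfl | rfl | rfl | rfl | rfl | rfl | rfl <;> dsimp only at h ⊢ <;>
    first | omega | simp

lemma mem_hstage_of_mem_box {i j : ℕ} (hi : 1 ≤ i) (hij : i ≤ j) {q : Pt} (hq : q ∈ hstage j)
    (h₁ : q.1 < 3 ^ i) (h₂ : q.2 < 3 ^ i) : q ∈ hstage i := by
  induction j, hij using Nat.le_induction generalizing q with
  | base => exact hq
  | succ j hij ih =>
    obtain ⟨n, rfl⟩ : ∃ n, j = n + 1 := ⟨j - 1, by omega⟩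
    obtain ⟨r, hr, g, hg, rfl⟩ := hq
    have := mem_box_of_mem_hstage hr
    have : (3 : ℤ) ^ i ≤ 3 ^ (n + 1) := pow_le_pow_right₀ (by norm_num) hij
    rcases mem_GH hg with rfl | rfl | rfl | rfl | rfl | rfl | rfl <;> dsimp only at h₁ h₂ ⊢ <;>
      first | omega | simpa using ih hr (by simpa using h₁) (by simpa using h₂)

lemma mem_hstage_of_mem_HFractal {i : ℕ} (hi : 1 ≤ i) {q : Pt} (hq : q ∈ HFractal)
    (h₁ : q.1 < 3 ^ i) (h₂ : q.2 < 3 ^ i) : q ∈ hstage i := by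
  obtain ⟨j, hj, hqj⟩ := hq
  rcases le_total j i with hji | hij
  · exact hstage_monotone hji hqj
  · exact mem_hstage_of_mem_box hi hij hqj h₁ h₂

lemma eq_centerH_of_mem_hstage : ∀ {n : ℕ} {q : Pt}, q ∈ hstage (n + 1) →
    q.1 = (centerH (n + 1)).1 → q = centerH (n + 1)
  | 0, _, hq, h => by
    rcases mem_GH hq with rfl | rfl | rfl | rfl | rfl | rfl | rfl <;> revert h <;> decide
  | n + 1, q, hq, h => by
    have := three_pow_mod_two (n + 1)
    have : (0 : ℤ) < 3 ^ (n + 1) := by positivity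
    simp only [centerH] at h ⊢
    obtain ⟨r, hr, rfl⟩ := exists_of_mem_hstage_middle_column hq (by omega) (by omega)
    have hr_center :=
      congrArg Prod.snd (eq_centerH_of_mem_hstage hr (by simp only [centerH]; omega))
    simp only [centerH] at hr_center
    ext <;> dsimp only <;> omega

lemma exists_snd_eq_of_mem_hstage_of_fst_eq : ∀ {n : ℕ} {q : Pt}, q ∈ hstage (n + 1) →
    q.1 = ((3 : ℤ) ^ n - 1) / 2 →
    ∃ k : ℤ, 0 ≤ k ∧ k ≤ 2 ∧ q.2 = ((3 : ℤ) ^ n - 1) / 2 + 3 ^ n * k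
  | 0, q, hq, h => by
    refine ⟨q.2, ?_⟩
    rcases mem_GH hq with rfl | rfl | rfl | rfl | rfl | rfl | rfl <;> revert h <;> norm_num
  | n + 1, q, hq, h => by
    have := three_pow_mod_two (n + 1)
    have : (0 : ℤ) < 3 ^ (n + 1) := by positivity
    obtain ⟨r, hr, k, hk₀, hk₂, rfl⟩ := exists_of_mem_hstage_left_column hq (by omega)
    have hr_center := congrArg Prod.snd (eq_centerH_of_mem_hstage hr h)
    simp only [centerH] at hr_center
    exact ⟨k, hk₀, hk₂, by dsimp only; omega⟩

lemma mem_leftBotH_of_mem_hstage {n : ℕ} {q : Pt} (hq : q ∈ hstage (n + 2))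
    (h : q.1 = 3 ^ (n + 1) + ((3 : ℤ) ^ n - 1) / 2) : q ∈ leftBotH (n + 2) := by
  have := three_pow_mod_two n
  have : (0 : ℤ) < 3 ^ n := by positivity
  obtain ⟨r, hr, rfl⟩ := exists_of_mem_hstage_middle_column hq (by omega) (by omega)
  obtain ⟨k, hk₀, hk₂, hk⟩ := exists_snd_eq_of_mem_hstage_of_fst_eq hr (by dsimp only at h; omega)
  refine ⟨(0, k), ?_, ?_⟩
  · interval_cases k <;> simp
  · simp only [Nat.add_sub_cancel, Nat.reduceSubDiff] at h ⊢
    ext <;> dsimp only at h ⊢ <;> omega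

/-- For `i ≥ 2`, the left-center of `h_i` is separated from the
rest of `𝐇` by the three left bottleneck points and the center point. -/
theorem leftCenterH_separated :
    ∀ i : ℕ, 2 ≤ i → ∀ p ∈ leftCenterH i, ∀ q ∈ HFractal, q ∉ leftCenterH i →
      adjPt p q → q ∈ leftBotH i ∨ q = centerH i := by
  intro i hi p hp q hq hq_out hpq
  obtain ⟨n, rfl⟩ : ∃ n, i = n + 2 := ⟨i - 2, by omega⟩
  simp only [leftCenterH, Set.mem_ofPred_eq, Nat.add_sub_cancel, Nat.reduceSubDiff] at hp hq_out
  obtain ⟨hp, hp_left, hp_right⟩ := hp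
  have hodd := three_pow_mod_two n
  have hpos : (0 : ℤ) < 3 ^ n := by positivity
  have hpow : (3 : ℤ) ^ (n + 2) = 9 * 3 ^ n := by ring
  obtain ⟨r, hr, rfl⟩ := exists_of_mem_hstage_middle_column hp (by omega) (by omega)
  have hr_box := mem_box_of_mem_hstage hr
  obtain ⟨hx, hy⟩ := hpq.abs_sub_le
  rw [abs_le] at hx hy
  dsimp only at hp_left hp_right hx hy
  have hq_mem : q ∈ hstage (n + 2) :=
    mem_hstage_of_mem_HFractal (by omega) hq (by omega) (by omega)
  have hq_column :
      q.1 = 3 ^ (n + 1) + ((3 : ℤ) ^ n - 1) / 2 ∨ q.1 = ((3 : ℤ) ^ (n + 2) - 1) / 2 := by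
    by_contra! hne
    exact hq_out ⟨hq_mem, by omega, by omega⟩
  rcases hq_column with h | h
  · exact Or.inl (mem_leftBotH_of_mem_hstage hq_mem h)
  · exact Or.inr (eq_centerH_of_mem_hstage hq_mem h)
end

section
/- For all integers i, j with 3 ≤ i < j, let t_i and t_j denote the top-left bottleneck points of h_i and h_j respectively. For every grid path p_0, p_1, …, p_n in the H fractal 𝐇 such that p_0 = t_j, each of p_1, …, p_n lies in the left-center of h_j, and the second coordinate of p_n is at most (second coordinate of t_j) − 3^{j-3}, there exists an index l ≤ n such that p_l + t_i − t_j ∉ 𝐇. -/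
/-- The top-left bottleneck point of stage `h_j` of the H fractal (for `j ≥ 2`). -/
def tH (j : ℕ) : Pt :=
  (3 ^ (j - 1) + ((3 : ℤ) ^ (j - 2) - 1) / 2,
   3 ^ (j - 1) + ((3 : ℤ) ^ (j - 2) - 1) / 2 + 2 * 3 ^ (j - 2))

/-- digit of `x` in base 3 at position `t` -/
def dig (x : ℤ) (t : ℕ) : ℤ := x / 3 ^ t % 3

lemma dig_mid (a E : ℤ) (u : ℕ) (h0 : 0 ≤ a) (h1 : a < 3 ^ u) :
    dig (a + 3 ^ u * E) u = E % 3 := by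
  unfold dig
  rw [mul_comm ((3:ℤ)^u) E, Int.add_mul_ediv_right a E (by positivity : (3:ℤ)^u ≠ 0),
      Int.ediv_eq_zero_of_lt h0 h1, zero_add]

lemma dig_lo (a E : ℤ) (u t : ℕ) (ht : t < u) : dig (a + 3 ^ u * E) t = dig a t := by
  obtain ⟨v, rfl⟩ : ∃ v, u = t + (v + 1) := ⟨u - t - 1, by omega⟩
  unfold dig
  rw [show a + 3 ^ (t + (v+1)) * E = a + (3 * (3 ^ v * E)) * 3 ^ t by ring,
      Int.add_mul_ediv_right _ _ (by positivity : (3:ℤ)^t ≠ 0),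
      Int.add_mul_emod_self_left]

lemma dig_hi (x : ℤ) (t : ℕ) (h0 : 0 ≤ x) (h : x < 3 ^ t) : dig x t = 0 := by
  unfold dig
  rw [Int.ediv_eq_zero_of_lt h0 h]
  rfl

lemma GH_facts (g : Pt) (h : g ∈ GH) :
    0 ≤ g.1 ∧ g.1 < 3 ∧ 0 ≤ g.2 ∧ g.2 < 3 ∧ ¬(g.1 = 1 ∧ g.2 ≠ 1) := by
  simp only [GH, Set.mem_insert_iff, Set.mem_singleton_iff] at h
  rcases h with rfl|rfl|rfl|rfl|rfl|rfl|rfl <;> norm_num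

lemma hstage_digits : ∀ (N : ℕ) (q : Pt), q ∈ hstage N →
    0 ≤ q.1 ∧ q.1 < 3 ^ N ∧ 0 ≤ q.2 ∧ q.2 < 3 ^ N ∧
      ∀ t, ¬(dig q.1 t = 1 ∧ dig q.2 t ≠ 1) := by
  intro N
  induction N with
  | zero => intro q h; exact h.elim
  | succ n ih =>
    intro q h
    cases n with
    | zero =>
      obtain ⟨h1, h2, h3, h4, h5⟩ := GH_facts q h
      refine ⟨h1, by simpa using h2, h3, by simpa using h4, ?_⟩
      intro t
      cases t with
      | zero =>
        have e1 : dig q.1 0 = q.1 := by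
          unfold dig; rw [pow_zero, Int.ediv_one, Int.emod_eq_of_lt h1 h2]
        have e2 : dig q.2 0 = q.2 := by
          unfold dig; rw [pow_zero, Int.ediv_one, Int.emod_eq_of_lt h3 h4]
        rw [e1, e2]; exact h5
      | succ t =>
        rw [dig_hi q.1 (t+1) h1 (lt_of_lt_of_le h2 (by
          calc (3:ℤ) = 3^1 := by norm_num
          _ ≤ 3^(t+1) := pow_le_pow_right₀ (by norm_num) (by omega)))]
        simp
    | succ k =>
      obtain ⟨P, hP, g, hg, rfl⟩ := h
      obtain ⟨hp1, hp2, hp3, hp4, hp5⟩ := ih P hP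
      obtain ⟨hg1, hg2, hg3, hg4, hg5⟩ := GH_facts g hg
      have hpow : (3:ℤ) ^ (k+1+1) = 3 ^ (k+1) * 3 := pow_succ 3 (k+1)
      have hpos : (0:ℤ) < 3 ^ (k+1) := by positivity
      have hb1 : (0:ℤ) ≤ P.1 + 3 ^ (k+1) * g.1 := by nlinarith
      have hb2 : P.1 + 3 ^ (k+1) * g.1 < 3 ^ (k+1+1) := by nlinarith
      have hb3 : (0:ℤ) ≤ P.2 + 3 ^ (k+1) * g.2 := by nlinarith
      have hb4 : P.2 + 3 ^ (k+1) * g.2 < 3 ^ (k+1+1) := by nlinarith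
      refine ⟨hb1, hb2, hb3, hb4, ?_⟩
      intro t
      rcases lt_trichotomy t (k+1) with ht | rfl | ht
      · rw [show ((P.1 + 3^(k+1)*g.1, P.2 + 3^(k+1)*g.2) : Pt).1 = P.1 + 3^(k+1)*g.1 from rfl,
            show ((P.1 + 3^(k+1)*g.1, P.2 + 3^(k+1)*g.2) : Pt).2 = P.2 + 3^(k+1)*g.2 from rfl,
            dig_lo P.1 g.1 (k+1) t ht, dig_lo P.2 g.2 (k+1) t ht]
        exact hp5 t
      · rw [show ((P.1 + 3^(k+1)*g.1, P.2 + 3^(k+1)*g.2) : Pt).1 = P.1 + 3^(k+1)*g.1 from rfl,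
            show ((P.1 + 3^(k+1)*g.1, P.2 + 3^(k+1)*g.2) : Pt).2 = P.2 + 3^(k+1)*g.2 from rfl,
            dig_mid P.1 g.1 (k+1) hp1 hp2, dig_mid P.2 g.2 (k+1) hp3 hp4,
            Int.emod_eq_of_lt hg1 hg2, Int.emod_eq_of_lt hg3 hg4]
        exact hg5
      · have hle : (3:ℤ) ^ (k+1+1) ≤ 3 ^ t := pow_le_pow_right₀ (by norm_num) (by omega)
        rw [show ((P.1 + 3^(k+1)*g.1, P.2 + 3^(k+1)*g.2) : Pt).1 = P.1 + 3^(k+1)*g.1 from rfl,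
            dig_hi _ t hb1 (lt_of_lt_of_le hb2 hle)]
        simp

lemma not_in_H (q : Pt) (t : ℕ) (h1 : dig q.1 t = 1) (h2 : dig q.2 t ≠ 1) :
    q ∉ HFractal := by
  rintro ⟨N, -, hm⟩
  exact (hstage_digits N q hm).2.2.2.2 t ⟨h1, h2⟩

lemma not_in_hstage (N : ℕ) (q : Pt) (t : ℕ) (h1 : dig q.1 t = 1) (h2 : dig q.2 t ≠ 1) :
    q ∉ hstage N := fun hm => (hstage_digits N q hm).2.2.2.2 t ⟨h1, h2⟩

def C3 (a : ℕ) : ℤ := ((3:ℤ) ^ a - 1) / 2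
lemma two_dvd_pow_sub_one (a : ℕ) : (2:ℤ) ∣ 3 ^ a - 1 := by
  induction a with
  | zero => norm_num
  | succ k ih =>
    rw [show (3:ℤ)^(k+1) - 1 = 3*(3^k - 1) + 2 by ring]
    exact dvd_add (ih.mul_left 3) (by norm_num)
lemma two_C3 (a : ℕ) : 2 * C3 a = 3 ^ a - 1 := by
  rw [C3, mul_comm, Int.ediv_mul_cancel (two_dvd_pow_sub_one a)]
lemma C3_succ (a : ℕ) : C3 (a + 1) = 3 * C3 a + 1 := by
  have h1 := two_C3 a
  have h2 := two_C3 (a + 1)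
  have h3 : (3:ℤ) ^ (a+1) = 3 * 3 ^ a := by ring
  linarith
lemma C3_split (u v : ℕ) : C3 (u + v) = C3 u + 3 ^ u * C3 v := by
  have h1 := two_C3 (u + v)
  have h2 := two_C3 u
  have h3 := two_C3 v
  have h4 : (3:ℤ) ^ (u + v) = 3 ^ u * 3 ^ v := pow_add 3 u v
  have h5 : 2 * C3 (u + v) = 2 * (C3 u + 3 ^ u * C3 v) := by
    linear_combination h1 - h2 - (3:ℤ)^u * h3 - h4
  linarith

-- wall digit computations
lemma digX (e d : ℕ) (r : ℤ) (h1 : 1 ≤ r) (h2 : r ≤ C3 e) :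
    dig (3^(e+d+2) + C3 (e+d+1) + r) e = 1 := by
  have hsplit : C3 (e+d+1) = C3 e + 3^e * C3 (d+1) := by
    rw [show e+d+1 = e+(d+1) by omega]; exact C3_split e (d+1)
  have h2C := two_C3 e
  have key : (3:ℤ)^(e+d+2) + C3 (e+d+1) + r = (C3 e + r) + 3^e * (3^(d+2) + C3 (d+1)) := by
    rw [hsplit, show e+d+2 = e+(d+2) by omega, pow_add]; ring
  rw [key, dig_mid _ _ e (by linarith) (by linarith), C3_succ d,
      show (3:ℤ)^(d+2) + (3*C3 d + 1) = 1 + (3^(d+1) + C3 d)*3 by ring,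
      Int.add_mul_emod_self_right]
  norm_num

lemma digYT (e d : ℕ) :
    dig (3^(e+d+2) + C3 (e+d+1) + 2*3^(e+d+1) + (C3 e + 1)) e = 2 := by
  have hsplit : C3 (e+d+1) = C3 e + 3^e * C3 (d+1) := by
    rw [show e+d+1 = e+(d+1) by omega]; exact C3_split e (d+1)
  have h2C := two_C3 e
  have key : (3:ℤ)^(e+d+2) + C3 (e+d+1) + 2*3^(e+d+1) + (C3 e + 1)
      = 0 + 3^e * (3^(d+2) + 2*3^(d+1) + C3 (d+1) + 1) := by
    rw [hsplit, show e+d+2 = e+(d+2) by omega, show e+d+1 = e+(d+1) by omega,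
        pow_add, pow_add]
    linear_combination h2C
  rw [key, dig_mid _ _ e le_rfl (by positivity), C3_succ d,
      show (3:ℤ)^(d+2) + 2*3^(d+1) + (3*C3 d + 1) + 1 = 2 + (3^(d+1) + 2*3^d + C3 d)*3 by ring,
      Int.add_mul_emod_self_right]
  norm_num

lemma digYB (e d : ℕ) :
    dig (3^(e+d+2) + C3 (e+d+1) + 2*3^(e+d+1) - (C3 e + 1)) e = 0 := by
  have hsplit : C3 (e+d+1) = C3 e + 3^e * C3 (d+1) := by
    rw [show e+d+1 = e+(d+1) by omega]; exact C3_split e (d+1)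
  have hpos : (0:ℤ) < 3^e := by positivity
  have key : (3:ℤ)^(e+d+2) + C3 (e+d+1) + 2*3^(e+d+1) - (C3 e + 1)
      = (3^e - 1) + 3^e * (3^(d+2) + 2*3^(d+1) + C3 (d+1) - 1) := by
    rw [hsplit, show e+d+2 = e+(d+2) by omega, show e+d+1 = e+(d+1) by omega,
        pow_add, pow_add]
    ring
  rw [key, dig_mid _ _ e (by linarith) (by linarith), C3_succ d,
      show (3:ℤ)^(d+2) + 2*3^(d+1) + (3*C3 d + 1) - 1 = 0 + (3^(d+1) + 2*3^d + C3 d)*3 by ring,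
      Int.add_mul_emod_self_right]
  norm_num

lemma digQ1 (e : ℕ) : dig (3^(e+1) + C3 e + (C3 e + 1)) e = 1 := by
  have h2C := two_C3 e
  have key : (3:ℤ)^(e+1) + C3 e + (C3 e + 1) = 0 + 3^e * 4 := by linear_combination h2C
  rw [key, dig_mid _ _ e le_rfl (by positivity)]
  norm_num

lemma digQ2 (e : ℕ) (s : ℤ) (hs1 : -C3 e ≤ s) (hs2 : s ≤ C3 e) :
    dig (3^(e+1) + C3 e + 2*3^e + s) e = 2 := by
  have h2C := two_C3 e
  have key : (3:ℤ)^(e+1) + C3 e + 2*3^e + s = (C3 e + s) + 3^e * 5 := by ring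
  rw [key, dig_mid _ _ e (by linarith) (by linarith)]
  norm_num

lemma adj_cases {a b : Pt} (h : adjPt a b) :
    (b.1 = a.1 + 1 ∧ b.2 = a.2) ∨ (b.1 = a.1 - 1 ∧ b.2 = a.2) ∨
    (b.1 = a.1 ∧ b.2 = a.2 + 1) ∨ (b.1 = a.1 ∧ b.2 = a.2 - 1) := by
  unfold adjPt at h
  rcases abs_cases (a.1 - b.1) with ⟨h1, h1'⟩ | ⟨h1, h1'⟩ <;>
    rcases abs_cases (a.2 - b.2) with ⟨h2, h2'⟩ | ⟨h2, h2'⟩ <;>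
    rw [h1, h2] at h <;> [skip; skip; skip; skip] <;> omega


set_option maxHeartbeats 2000000

/-- For `3 ≤ i < j`, every grid path in `𝐇` that starts at the
top-left bottleneck point `t_j` of `h_j`, stays in the left-center of `h_j`, and
descends vertically by at least `3^{j-3}`, has a point whose translate by
`t_i − t_j` lies outside `𝐇`. -/
theorem hFractal_top_left_growth_out_of_bounds :
    ∀ i j : ℕ, 3 ≤ i → i < j →
      ∀ (n : ℕ) (p : ℕ → Pt),
        (∀ k ≤ n, p k ∈ HFractal) →
        (∀ k < n, adjPt (p k) (p (k + 1))) →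
        p 0 = tH j →
        (∀ k, 1 ≤ k → k ≤ n → p k ∈ leftCenterH j) →
        (p n).2 ≤ (tH j).2 - 3 ^ (j - 3) →
        ∃ l ≤ n, p l + tH i - tH j ∉ HFractal := by
  intro i j hi hij n p _hmem hadj h0 hlc hdesc
  by_contra hcon
  push_neg at hcon
  obtain ⟨e, d, rfl, rfl⟩ : ∃ e d, i = e + 2 ∧ j = e + 2 + d + 1 :=
    ⟨i - 2, j - i - 1, by omega, by omega⟩
  have he : 1 ≤ e := by omega
  have h2C := two_C3 e
  have hCe1 : 1 ≤ C3 e := by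
    have h2 : (3:ℤ)^1 ≤ 3^e := pow_le_pow_right₀ (by norm_num) he
    norm_num at h2; linarith
  have hj1 : e + 2 + d + 1 - 1 = e + d + 2 := by omega
  have hj2 : e + 2 + d + 1 - 2 = e + d + 1 := by omega
  have hj3 : e + 2 + d + 1 - 3 = e + d := by omega
  have hi1 : e + 2 - 1 = e + 1 := by omega
  have hi2 : e + 2 - 2 = e := by omega
  have htj : tH (e+2+d+1) = (3^(e+d+2) + C3 (e+d+1),
      3^(e+d+2) + C3 (e+d+1) + 2*3^(e+d+1)) := by
    simp [tH, C3, hj1, hj2]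
  have hti : tH (e+2) = (3^(e+1) + C3 e, 3^(e+1) + C3 e + 2*3^e) := by
    simp [tH, C3, hi1, hi2]
  have hLC : ∀ k, 1 ≤ k → k ≤ n →
      p k ∈ hstage (e+2+d+1) ∧ 3^(e+d+2) + C3 (e+d+1) < (p k).1 := by
    intro k h1 h2
    have h := hlc k h1 h2
    simp only [leftCenterH, Set.mem_sep_iff] at h
    refine ⟨h.1, ?_⟩
    have hb := h.2.1
    rw [hj1, hj2] at hb
    exact hb
  -- the invariant : the path is trapped in a tiny box next to (tH j)
  have key : ∀ k, k ≤ n → 1 ≤ k →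
      3^(e+d+2) + C3 (e+d+1) + 1 ≤ (p k).1 ∧
      (p k).1 ≤ 3^(e+d+2) + C3 (e+d+1) + C3 e ∧
      3^(e+d+2) + C3 (e+d+1) + 2*3^(e+d+1) - C3 e ≤ (p k).2 ∧
      (p k).2 ≤ 3^(e+d+2) + C3 (e+d+1) + 2*3^(e+d+1) + C3 e := by
    intro k
    induction k with
    | zero => intro _ h; omega
    | succ k ih =>
      intro hkn _
      have hadjk := adj_cases (hadj k (by omega))
      have hlck := hLC (k+1) (by omega) hkn
      rcases Nat.eq_zero_or_pos k with rfl | hk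
      · have h01 : (p 0).1 = 3^(e+d+2) + C3 (e+d+1) := by rw [h0, htj]
        have h02 : (p 0).2 = 3^(e+d+2) + C3 (e+d+1) + 2*3^(e+d+1) := by rw [h0, htj]
        rcases hadjk with ⟨ha, hb⟩|⟨ha, hb⟩|⟨ha, hb⟩|⟨ha, hb⟩
        · exact ⟨by linarith, by linarith, by linarith, by linarith⟩
        · exact absurd hlck.2 (by linarith)
        · exact absurd hlck.2 (by linarith)
        · exact absurd hlck.2 (by linarith)
      · have IH := ih (by omega) hk
        obtain ⟨I1, I2, I3, I4⟩ := IH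
        rcases hadjk with ⟨ha, hb⟩|⟨ha, hb⟩|⟨ha, hb⟩|⟨ha, hb⟩
        · -- step right
          by_cases hedge : (p (k+1)).1 ≤ 3^(e+d+2) + C3 (e+d+1) + C3 e
          · exact ⟨by linarith, hedge, by linarith, by linarith⟩
          · exfalso
            push_neg at hedge
            have hpk1 : (p k).1 = 3^(e+d+2) + C3 (e+d+1) + C3 e := by linarith
            have hQ := hcon (k+1) (by omega)
            have hq1 : (p (k+1) + tH (e+2) - tH (e+2+d+1)).1
                = (p (k+1)).1 + (3^(e+1) + C3 e) - (3^(e+d+2) + C3 (e+d+1)) := by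
              simp [hti, htj]
            have hq2 : (p (k+1) + tH (e+2) - tH (e+2+d+1)).2
                = (p (k+1)).2 + (3^(e+1) + C3 e + 2*3^e)
                  - (3^(e+d+2) + C3 (e+d+1) + 2*3^(e+d+1)) := by
              simp [hti, htj]
            refine not_in_H _ e ?_ ?_ hQ
            · rw [hq1, show (p (k+1)).1 + (3^(e+1) + C3 e) - (3^(e+d+2) + C3 (e+d+1))
                  = 3^(e+1) + C3 e + (C3 e + 1) by linarith]
              exact digQ1 e
            · rw [hq2, show (p (k+1)).2 + (3^(e+1) + C3 e + 2*3^e)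
                    - (3^(e+d+2) + C3 (e+d+1) + 2*3^(e+d+1))
                  = 3^(e+1) + C3 e + 2*3^e
                    + ((p k).2 - (3^(e+d+2) + C3 (e+d+1) + 2*3^(e+d+1))) by linarith,
                digQ2 e _ (by linarith) (by linarith)]
              norm_num
        · -- step left
          have hlb := hlck.2
          exact ⟨by linarith, by linarith, by linarith, by linarith⟩
        · -- step up
          by_cases hedge : (p (k+1)).2 ≤ 3^(e+d+2) + C3 (e+d+1) + 2*3^(e+d+1) + C3 e
          · exact ⟨by linarith, by linarith, by linarith, hedge⟩
          · exfalso
            push_neg at hedge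
            have hpk2 : (p k).2 = 3^(e+d+2) + C3 (e+d+1) + 2*3^(e+d+1) + C3 e := by
              linarith
            refine not_in_hstage _ _ e ?_ ?_ hlck.1
            · rw [show (p (k+1)).1 = 3^(e+d+2) + C3 (e+d+1)
                  + ((p k).1 - (3^(e+d+2) + C3 (e+d+1))) by linarith]
              exact digX e d _ (by linarith) (by linarith)
            · rw [show (p (k+1)).2 = 3^(e+d+2) + C3 (e+d+1) + 2*3^(e+d+1)
                  + (C3 e + 1) by linarith, digYT e d]
              norm_num
        · -- step down
          by_cases hedge : 3^(e+d+2) + C3 (e+d+1) + 2*3^(e+d+1) - C3 e ≤ (p (k+1)).2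
          · exact ⟨by linarith, by linarith, hedge, by linarith⟩
          · exfalso
            push_neg at hedge
            have hpk2 : (p k).2 = 3^(e+d+2) + C3 (e+d+1) + 2*3^(e+d+1) - C3 e := by
              linarith
            refine not_in_hstage _ _ e ?_ ?_ hlck.1
            · rw [show (p (k+1)).1 = 3^(e+d+2) + C3 (e+d+1)
                  + ((p k).1 - (3^(e+d+2) + C3 (e+d+1))) by linarith]
              exact digX e d _ (by linarith) (by linarith)
            · rw [show (p (k+1)).2 = 3^(e+d+2) + C3 (e+d+1) + 2*3^(e+d+1)
                  - (C3 e + 1) by linarith, digYB e d]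
              norm_num
  -- conclusion
  have hn : 1 ≤ n := by
    by_contra hn0
    have hn0' : n = 0 := by omega
    subst hn0'
    rw [h0] at hdesc
    rw [htj, hj3] at hdesc
    have hdesc' : (3:ℤ)^(e+d+2) + C3 (e+d+1) + 2*3^(e+d+1)
        ≤ 3^(e+d+2) + C3 (e+d+1) + 2*3^(e+d+1) - 3^(e+d) := hdesc
    have : (0:ℤ) < 3^(e+d) := by positivity
    linarith
  have hfin := (key n le_rfl hn).2.2.1
  rw [htj, hj3] at hdesc
  have hdesc' : (p n).2 ≤ 3^(e+d+2) + C3 (e+d+1) + 2*3^(e+d+1) - 3^(e+d) := hdesc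
  have hp3 : (3:ℤ)^e ≤ 3^(e+d) := pow_le_pow_right₀ (by norm_num) (by omega)
  linarith
end

section
/- For every i ≥ 1, the stage h_i of the H fractal is a connected subset of ℤ² (with respect to grid adjacency), and the stage u_i of the U fractal is a connected subset of ℤ² (with respect to grid adjacency). -/
/-- The generator of the U fractal. -/
def GU : Set Pt := {(0,0),(0,1),(0,2),(1,0),(2,0),(2,1),(2,2)}

/-- `scaleAddU k A B = A + k·B` (componentwise). -/
def scaleAddU (k : ℤ) (A B : Set Pt) : Set Pt :=
  {q | ∃ p ∈ A, ∃ g ∈ B, q = (p.1 + k * g.1, p.2 + k * g.2)}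

/-- The stages of the U fractal: `ustage 1 = GU` and
`ustage (i+1) = ustage i + 3^i · GU` for `i ≥ 1`. -/
def ustage : ℕ → Set Pt
  | 0 => ∅
  | 1 => GU
  | n + 2 => scaleAddU (3 ^ (n + 1)) (ustage (n + 1)) GU

/-- The U fractal `𝐔 = ⋃_{i ≥ 1} u_i`. -/
def UFractal : Set Pt := {p | ∃ i : ℕ, 1 ≤ i ∧ p ∈ ustage i}

/-- A set `S ⊆ ℤ²` is connected with respect to grid adjacency. -/
def SetConn (S : Set Pt) : Prop :=
  ∀ p ∈ S, ∀ q ∈ S, ∃ (n : ℕ) (c : ℕ → Pt), c 0 = p ∧ c n = q ∧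
    (∀ k ≤ n, c k ∈ S) ∧ ∀ k < n, adjPt (c k) (c (k + 1))

/- ===== auxiliary machinery ===== -/

/-- Inductive walks inside a set `S` along grid adjacency. -/
inductive Walk (S : Set Pt) : Pt → Pt → Prop
  | refl (p : Pt) (h : p ∈ S) : Walk S p p
  | tail {p q r : Pt} : Walk S p q → r ∈ S → adjPt q r → Walk S p r

lemma Walk.mem_left {S : Set Pt} {p q : Pt} (w : Walk S p q) : p ∈ S := by
  induction w with
  | refl h => exact h
  | tail _ _ _ ih => exact ih

lemma Walk.mem_right {S : Set Pt} {p q : Pt} (w : Walk S p q) : q ∈ S := by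
  cases w with
  | refl h => exact h
  | tail _ h _ => exact h

lemma adjPt_symm {p q : Pt} (h : adjPt p q) : adjPt q p := by
  unfold adjPt at h ⊢
  rw [abs_sub_comm q.1, abs_sub_comm q.2]
  exact h

lemma Walk.trans {S : Set Pt} {p q r : Pt} (w1 : Walk S p q) (w2 : Walk S q r) :
    Walk S p r := by
  induction w2 with
  | refl _ => exact w1
  | tail _ h a ih => exact (ih).tail h a

lemma Walk.symm {S : Set Pt} {p q : Pt} (w : Walk S p q) : Walk S q p := by
  induction w with
  | refl h => exact .refl _ h
  | @tail q r w' h a ih =>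
      exact Walk.trans ((Walk.refl r h).tail w'.mem_right (adjPt_symm a)) ih

lemma Walk.toPath {S : Set Pt} {p q : Pt} (w : Walk S p q) :
    ∃ (n : ℕ) (c : ℕ → Pt), c 0 = p ∧ c n = q ∧
      (∀ k ≤ n, c k ∈ S) ∧ ∀ k < n, adjPt (c k) (c (k + 1)) := by
  induction w with
  | refl h =>
      exact ⟨0, fun _ => _, rfl, rfl, fun k _ => h, fun k hk => absurd hk (Nat.not_lt_zero k)⟩
  | @tail q r w' hr ha ih =>
      obtain ⟨n, c, h0, hn, hmem, hadj⟩ := ih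
      refine ⟨n + 1, fun k => if k ≤ n then c k else r, ?_, ?_, ?_, ?_⟩
      · simp [h0]
      · simp
      · intro k hk
        by_cases h : k ≤ n
        · simpa [h] using hmem k h
        · simpa [h] using hr
      · intro k hk
        by_cases h : k < n
        · have h1 : k ≤ n := le_of_lt h
          have h2 : k + 1 ≤ n := h
          simpa [h1, h2] using hadj k h
        · have hk' : k = n := by omega
          subst hk'
          have h2 : ¬ (k + 1 ≤ k) := by omega
          simpa [h2, hn] using ha

lemma setConn_of_walk {S : Set Pt} (h : ∀ p ∈ S, ∀ q ∈ S, Walk S p q) : SetConn S := by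
  intro p hp q hq
  exact (h p hp q hq).toPath

/-- Translation by `k • g`. -/
def tr (k : ℤ) (g p : Pt) : Pt := (p.1 + k * g.1, p.2 + k * g.2)

lemma adjPt_tr {k : ℤ} {g p q : Pt} (h : adjPt p q) : adjPt (tr k g p) (tr k g q) := by
  unfold adjPt at h
  unfold adjPt tr
  have e1 : p.1 + k * g.1 - (q.1 + k * g.1) = p.1 - q.1 := by ring
  have e2 : p.2 + k * g.2 - (q.2 + k * g.2) = p.2 - q.2 := by ring
  simpa [e1, e2] using h

lemma tr_mem {k : ℤ} {A B : Set Pt} {g p : Pt} (hg : g ∈ B) (hp : p ∈ A) :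
    tr k g p ∈ scaleAdd k A B := ⟨p, hp, g, hg, rfl⟩

lemma walk_tr {k : ℤ} {A B : Set Pt} {g p q : Pt} (hg : g ∈ B)
    (w : Walk A p q) : Walk (scaleAdd k A B) (tr k g p) (tr k g q) := by
  induction w with
  | refl h => exact .refl _ (tr_mem hg h)
  | tail _ hr ha ih => exact ih.tail (tr_mem hg hr) (adjPt_tr ha)

lemma adj_cases_s19 {p q : Pt} (h : adjPt p q) :
    q = (p.1 + 1, p.2) ∨ q = (p.1 - 1, p.2) ∨ q = (p.1, p.2 + 1) ∨ q = (p.1, p.2 - 1) := by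
  unfold adjPt at h
  rw [Int.abs_eq_natAbs, Int.abs_eq_natAbs] at h
  rcases p with ⟨a, b⟩; rcases q with ⟨c, d⟩
  simp only [Prod.mk.injEq]
  omega

/-- The key connectivity lemma for one substitution step. -/
lemma conn_scaleAdd (k : ℤ) (A B : Set Pt)
    (hA : ∀ p ∈ A, ∀ q ∈ A, Walk A p q)
    (hB : ∀ p ∈ B, ∀ q ∈ B, Walk B p q)
    (c00 : ((0 : ℤ), (0 : ℤ)) ∈ A) (c01 : ((0 : ℤ), k - 1) ∈ A)
    (c10 : (k - 1, (0 : ℤ)) ∈ A) (c11 : (k - 1, k - 1) ∈ A) :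
    ∀ p ∈ scaleAdd k A B, ∀ q ∈ scaleAdd k A B, Walk (scaleAdd k A B) p q := by
  set S := scaleAdd k A B with hS
  -- walks between base corners of copies
  have key : ∀ g g' : Pt, Walk B g g' → Walk S (tr k g (0, 0)) (tr k g' (0, 0)) := by
    intro g g' w
    induction w with
    | refl hg => exact .refl _ (tr_mem hg c00)
    | @tail g' g'' w' hg'' ha ih =>
        have hg' : g' ∈ B := w'.mem_right
        refine ih.trans ?_
        rcases adj_cases_s19 ha with h | h | h | h
        · -- g'' = g' + (1,0): exit via (k-1,0), enter at (0,0)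
          have w1 : Walk S (tr k g' (0, 0)) (tr k g' (k - 1, 0)) :=
            walk_tr hg' (hA _ c00 _ c10)
          have step : adjPt (tr k g' (k - 1, 0)) (tr k g'' (0, 0)) := by
            subst h; unfold adjPt tr
            have e1 : k - 1 + k * g'.1 - (0 + k * (g'.1 + 1)) = -1 := by ring
            have e2 : (0 : ℤ) + k * g'.2 - (0 + k * g'.2) = 0 := by ring
            simp only []
            rw [e1, e2]; decide
          exact w1.tail (tr_mem (h ▸ hg'') c00) step
        · -- g'' = g' - (1,0): step from (0,0) to copy's (k-1,0), then walk to (0,0)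
          have step : adjPt (tr k g' (0, 0)) (tr k g'' (k - 1, 0)) := by
            subst h; unfold adjPt tr
            have e1 : (0 : ℤ) + k * g'.1 - (k - 1 + k * (g'.1 - 1)) = 1 := by ring
            have e2 : (0 : ℤ) + k * g'.2 - (0 + k * g'.2) = 0 := by ring
            simp only []
            rw [e1, e2]; decide
          have w1 : Walk S (tr k g' (0, 0)) (tr k g'' (k - 1, 0)) :=
            (Walk.refl _ (tr_mem hg' c00)).tail (tr_mem (h ▸ hg'') c10) step
          exact w1.trans (walk_tr (h ▸ hg'') (hA _ c10 _ c00))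
        · -- g'' = g' + (0,1)
          have w1 : Walk S (tr k g' (0, 0)) (tr k g' (0, k - 1)) :=
            walk_tr hg' (hA _ c00 _ c01)
          have step : adjPt (tr k g' (0, k - 1)) (tr k g'' (0, 0)) := by
            subst h; unfold adjPt tr
            have e1 : (0 : ℤ) + k * g'.1 - (0 + k * g'.1) = 0 := by ring
            have e2 : k - 1 + k * g'.2 - (0 + k * (g'.2 + 1)) = -1 := by ring
            simp only []
            rw [e1, e2]; decide
          exact w1.tail (tr_mem (h ▸ hg'') c00) step
        · -- g'' = g' - (0,1)
          have step : adjPt (tr k g' (0, 0)) (tr k g'' (0, k - 1)) := by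
            subst h; unfold adjPt tr
            have e1 : (0 : ℤ) + k * g'.1 - (0 + k * g'.1) = 0 := by ring
            have e2 : (0 : ℤ) + k * g'.2 - (k - 1 + k * (g'.2 - 1)) = 1 := by ring
            simp only []
            rw [e1, e2]; decide
          have w1 : Walk S (tr k g' (0, 0)) (tr k g'' (0, k - 1)) :=
            (Walk.refl _ (tr_mem hg' c00)).tail (tr_mem (h ▸ hg'') c01) step
          exact w1.trans (walk_tr (h ▸ hg'') (hA _ c01 _ c00))
  rintro p ⟨a, ha, g, hg, rfl⟩ q ⟨b, hb, g', hg', rfl⟩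
  have w1 : Walk S (tr k g a) (tr k g (0, 0)) := walk_tr hg (hA _ ha _ c00)
  have w2 : Walk S (tr k g' (0, 0)) (tr k g' b) := walk_tr hg' (hA _ c00 _ hb)
  exact (w1.trans (key g g' (hB g hg g' hg'))).trans w2

/- ===== generators are connected and contain the corners ===== -/

lemma GH_conn : ∀ p ∈ GH, ∀ q ∈ GH, Walk GH p q := by
  have m00 : ((0:ℤ),(0:ℤ)) ∈ GH := by simp [GH]
  have m01 : ((0:ℤ),(1:ℤ)) ∈ GH := by simp [GH]
  have m02 : ((0:ℤ),(2:ℤ)) ∈ GH := by simp [GH]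
  have m11 : ((1:ℤ),(1:ℤ)) ∈ GH := by simp [GH]
  have m20 : ((2:ℤ),(0:ℤ)) ∈ GH := by simp [GH]
  have m21 : ((2:ℤ),(1:ℤ)) ∈ GH := by simp [GH]
  have m22 : ((2:ℤ),(2:ℤ)) ∈ GH := by simp [GH]
  have w01 : Walk GH (0,0) (0,1) := (Walk.refl _ m00).tail m01 (by unfold adjPt; norm_num)
  have w02 : Walk GH (0,0) (0,2) := w01.tail m02 (by unfold adjPt; norm_num)
  have w11 : Walk GH (0,0) (1,1) := w01.tail m11 (by unfold adjPt; norm_num)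
  have w21 : Walk GH (0,0) (2,1) := w11.tail m21 (by unfold adjPt; norm_num)
  have w20 : Walk GH (0,0) (2,0) := w21.tail m20 (by unfold adjPt; norm_num)
  have w22 : Walk GH (0,0) (2,2) := w21.tail m22 (by unfold adjPt; norm_num)
  have w00 : Walk GH (0,0) (0,0) := .refl _ m00
  have all : ∀ p ∈ GH, Walk GH (0,0) p := by
    intro p hp
    rcases hp with h|h|h|h|h|h|h <;> subst h
    exacts [w00, w01, w02, w11, w20, w21, w22]
  intro p hp q hq
  exact (all p hp).symm.trans (all q hq)

lemma GU_conn : ∀ p ∈ GU, ∀ q ∈ GU, Walk GU p q := by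
  have m00 : ((0:ℤ),(0:ℤ)) ∈ GU := by simp [GU]
  have m01 : ((0:ℤ),(1:ℤ)) ∈ GU := by simp [GU]
  have m02 : ((0:ℤ),(2:ℤ)) ∈ GU := by simp [GU]
  have m10 : ((1:ℤ),(0:ℤ)) ∈ GU := by simp [GU]
  have m20 : ((2:ℤ),(0:ℤ)) ∈ GU := by simp [GU]
  have m21 : ((2:ℤ),(1:ℤ)) ∈ GU := by simp [GU]
  have m22 : ((2:ℤ),(2:ℤ)) ∈ GU := by simp [GU]
  have w01 : Walk GU (0,0) (0,1) := (Walk.refl _ m00).tail m01 (by unfold adjPt; norm_num)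
  have w02 : Walk GU (0,0) (0,2) := w01.tail m02 (by unfold adjPt; norm_num)
  have w10 : Walk GU (0,0) (1,0) := (Walk.refl _ m00).tail m10 (by unfold adjPt; norm_num)
  have w20 : Walk GU (0,0) (2,0) := w10.tail m20 (by unfold adjPt; norm_num)
  have w21 : Walk GU (0,0) (2,1) := w20.tail m21 (by unfold adjPt; norm_num)
  have w22 : Walk GU (0,0) (2,2) := w21.tail m22 (by unfold adjPt; norm_num)
  have w00 : Walk GU (0,0) (0,0) := .refl _ m00
  have all : ∀ p ∈ GU, Walk GU (0,0) p := by
    intro p hp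
    rcases hp with h|h|h|h|h|h|h <;> subst h
    exacts [w00, w01, w02, w10, w20, w21, w22]
  intro p hp q hq
  exact (all p hp).symm.trans (all q hq)

/-- Corner property of a set at scale `k`. -/
def Corn (S : Set Pt) (k : ℤ) : Prop :=
  ((0:ℤ),(0:ℤ)) ∈ S ∧ ((0:ℤ), k - 1) ∈ S ∧ (k - 1, (0:ℤ)) ∈ S ∧ (k - 1, k - 1) ∈ S

lemma corn_step {k : ℤ} {A G : Set Pt} (hc : Corn A k)
    (g00 : ((0:ℤ),(0:ℤ)) ∈ G) (g02 : ((0:ℤ),(2:ℤ)) ∈ G)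
    (g20 : ((2:ℤ),(0:ℤ)) ∈ G) (g22 : ((2:ℤ),(2:ℤ)) ∈ G) :
    Corn (scaleAdd k A G) (3 * k) := by
  obtain ⟨h00, h01, h10, h11⟩ := hc
  refine ⟨⟨_, h00, _, g00, ?_⟩, ⟨_, h01, _, g02, ?_⟩, ⟨_, h10, _, g20, ?_⟩, ⟨_, h11, _, g22, ?_⟩⟩ <;>
    · simp only [Prod.mk.injEq]; constructor <;> ring

/- ===== the main induction ===== -/

lemma main_aux : ∀ n : ℕ,
    ((∀ p ∈ hstage (n+1), ∀ q ∈ hstage (n+1), Walk (hstage (n+1)) p q) ∧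
      Corn (hstage (n+1)) (3 ^ (n+1))) ∧
    ((∀ p ∈ ustage (n+1), ∀ q ∈ ustage (n+1), Walk (ustage (n+1)) p q) ∧
      Corn (ustage (n+1)) (3 ^ (n+1))) := by
  intro n
  induction n with
  | zero =>
      constructor
      · refine ⟨GH_conn, ?_⟩
        show Corn GH 3
        refine ⟨?_, ?_, ?_, ?_⟩ <;> · show _ ∈ GH; norm_num [GH]
      · refine ⟨GU_conn, ?_⟩
        show Corn GU 3
        refine ⟨?_, ?_, ?_, ?_⟩ <;> · show _ ∈ GU; norm_num [GU]
  | succ n ih =>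
      obtain ⟨⟨hHc, hHcorn⟩, ⟨hUc, hUcorn⟩⟩ := ih
      have e3 : (3 : ℤ) ^ (n + 2) = 3 * 3 ^ (n + 1) := by ring
      constructor
      · have hGH00 : ((0:ℤ),(0:ℤ)) ∈ GH := by simp [GH]
        have hGH02 : ((0:ℤ),(2:ℤ)) ∈ GH := by simp [GH]
        have hGH20 : ((2:ℤ),(0:ℤ)) ∈ GH := by simp [GH]
        have hGH22 : ((2:ℤ),(2:ℤ)) ∈ GH := by simp [GH]
        have hcorn := corn_step hHcorn hGH00 hGH02 hGH20 hGH22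
        obtain ⟨c00, c01, c10, c11⟩ := hHcorn
        constructor
        · show ∀ p ∈ scaleAdd (3 ^ (n+1)) (hstage (n+1)) GH, ∀ q ∈ _, Walk _ p q
          exact conn_scaleAdd _ _ _ hHc GH_conn c00 c01 c10 c11
        · show Corn (scaleAdd (3 ^ (n+1)) (hstage (n+1)) GH) (3 ^ (n+2))
          rw [e3]; exact hcorn
      · have hGU00 : ((0:ℤ),(0:ℤ)) ∈ GU := by simp [GU]
        have hGU02 : ((0:ℤ),(2:ℤ)) ∈ GU := by simp [GU]
        have hGU20 : ((2:ℤ),(0:ℤ)) ∈ GU := by simp [GU]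
        have hGU22 : ((2:ℤ),(2:ℤ)) ∈ GU := by simp [GU]
        have hcorn := corn_step hUcorn hGU00 hGU02 hGU20 hGU22
        obtain ⟨c00, c01, c10, c11⟩ := hUcorn
        constructor
        · show ∀ p ∈ scaleAdd (3 ^ (n+1)) (ustage (n+1)) GU, ∀ q ∈ _, Walk _ p q
          exact conn_scaleAdd _ _ _ hUc GU_conn c00 c01 c10 c11
        · show Corn (scaleAdd (3 ^ (n+1)) (ustage (n+1)) GU) (3 ^ (n+2))
          rw [e3]; exact hcorn

/-- For every `i ≥ 1`, the stage `h_i` of the H fractal and the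
stage `u_i` of the U fractal are connected subsets of `ℤ²`. -/
theorem hstage_and_ustage_connected :
    ∀ i : ℕ, 1 ≤ i → SetConn (hstage i) ∧ SetConn (ustage i) := by
  intro i hi
  obtain ⟨n, rfl⟩ := Nat.exists_eq_add_of_le hi
  rw [Nat.add_comm 1 n]
  obtain ⟨⟨hH, _⟩, ⟨hU, _⟩⟩ := main_aux n
  exact ⟨setConn_of_walk hH, setConn_of_walk hU⟩
end
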